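/- Let w ∈ ℝ^p with wᵢ > 0 for every i, and let f(β) = Σᵢ wᵢ·|βᵢ| be the associated weighted ℓ₁ norm. Then for every β ∈ ℝ^p with β ≠ 0, the relative diameter satisfies φ(β;f)² = 4·Σ_{i : βᵢ ≠ 0} wᵢ². -/

import Mathlib

/-
The dual ball of `f x = ∑ wᵢ |xᵢ|` is the box `∏ᵢ [-wᵢ, wᵢ]`, and `∂f(β)` is its face
`{g : gᵢ = wᵢ sign βᵢ for i ∈ S}`, where `S` is the support of `β`. Projecting a box point onto
the face moves only the coordinates in `S`, each by at most `2wᵢ`; and the box point equal to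
`-wᵢ sign βᵢ` on `S` and to `0` elsewhere is at least that far from every point of the face.
Hence the Hausdorff distance is exactly `√(4 ∑_{i ∈ S} wᵢ²)`.
-/

open Metric Set

noncomputable section

/-- Euclidean space `ℝ^p`. -/
abbrev E (p : ℕ) := EuclideanSpace ℝ (Fin p)

/-- The dual norm of a norm `N` on `ℝ^p`: `‖θ‖⋆ = sup {⟨θ, β⟩ : N β ≤ 1}`. -/
def dualOf {p : ℕ} (N : E p → ℝ) (θ : E p) : ℝ :=
  sSup ((fun β => (inner ℝ θ β : ℝ)) '' {β | N β ≤ 1})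

/-- The dual norm unit ball `B⋆ = {z : ‖z‖⋆ ≤ 1}`. -/
def dualBall {p : ℕ} (N : E p → ℝ) : Set (E p) :=
  {z | dualOf N z ≤ 1}

/-- The subdifferential of `N` at `β`. -/
def subdiff {p : ℕ} (N : E p → ℝ) (β : E p) : Set (E p) :=
  {g | ∀ y : E p, N y ≥ N β + (inner ℝ g (y - β) : ℝ)}

/-- The relative diameter `φ(β; N)`: the Hausdorff distance (in the Euclidean metric)
between the dual norm ball and the subdifferential of `N` at `β`. -/
def relDiam {p : ℕ} (N : E p → ℝ) (β : E p) : ℝ :=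
  Metric.hausdorffDist (dualBall N) (subdiff N β)

open scoped InnerProductSpace

theorem Metric.hausdorffDist_eq_of_subset {α : Type*} [PseudoMetricSpace α] {s t : Set α} {r : ℝ}
    (hr : 0 ≤ r) (hts : t ⊆ s) (hnear : ∀ x ∈ s, ∃ y ∈ t, dist x y ≤ r)
    (hfar : ∃ x ∈ s, ∀ y ∈ t, r ≤ dist x y) : hausdorffDist s t = r := by
  have hback : ∀ y ∈ t, ∃ x ∈ s, dist y x ≤ r := fun y hy => ⟨y, hts hy, by simpa using hr⟩
  have hfin : hausdorffEDist s t ≠ ⊤ :=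
    ne_top_of_le_ne_top ENNReal.ofReal_ne_top <| hausdorffEDist_le_of_mem_edist
      (fun x hx => (hnear x hx).imp fun _ ⟨hy, h⟩ => ⟨hy, (edist_le_ofReal hr).2 h⟩)
      (fun y hy => (hback y hy).imp fun _ ⟨hx, h⟩ => ⟨hx, (edist_le_ofReal hr).2 h⟩)
  obtain ⟨x, hx, hxfar⟩ := hfar
  obtain ⟨y, hy, -⟩ := hnear x hx
  refine le_antisymm (hausdorffDist_le_of_mem_dist hr hnear hback) ?_
  exact ((le_infDist ⟨y, hy⟩).2 fun z hz => hxfar z hz).trans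
    (infDist_le_hausdorffDist_of_mem hx hfin)

theorem Real.sign_mul_self (x : ℝ) : Real.sign x * x = |x| := by
  rcases lt_trichotomy x 0 with h | rfl | h
  · rw [Real.sign_of_neg h, abs_of_neg h, neg_one_mul]
  · simp
  · rw [Real.sign_of_pos h, abs_of_pos h, one_mul]

theorem Real.abs_sign_le_one (x : ℝ) : |Real.sign x| ≤ 1 := by
  rcases Real.sign_apply_eq x with h | h | h <;> simp [h]

theorem Real.abs_sign_of_ne_zero {x : ℝ} (hx : x ≠ 0) : |Real.sign x| = 1 := by
  rcases Real.sign_apply_eq_of_ne_zero x hx with h | h <;> simp [h]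

/-- The subdifferential of `t ↦ w * |t|` at `b`. -/
theorem forall_mul_abs_le_mul_abs_add_iff {w b c : ℝ} (hw : 0 ≤ w) :
    (∀ t, w * |b| + c * t ≤ w * |b + t|) ↔ |c| ≤ w ∧ (b ≠ 0 → c = w * Real.sign b) := by
  constructor
  · intro h
    have hc : |c| ≤ w := by
      have hup := mul_le_mul_of_nonneg_left (abs_add_le b 1) hw
      have hdown := mul_le_mul_of_nonneg_left (abs_add_le b (-1)) hw
      rw [abs_neg, abs_one] at hdown
      rw [abs_one] at hup
      exact abs_le.2 ⟨by linarith [h (-1)], by linarith [h 1]⟩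
    refine ⟨hc, fun hb => ?_⟩
    have hcb : c * b = w * |b| := by
      refine le_antisymm ?_ (by simpa using h (-b))
      calc c * b ≤ |c| * |b| := (le_abs_self _).trans (abs_mul c b).le
        _ ≤ w * |b| := mul_le_mul_of_nonneg_right hc (abs_nonneg b)
    rwa [← Real.sign_mul_self, ← mul_assoc, mul_left_inj' hb] at hcb
  · rintro ⟨hc, hsign⟩ t
    have hcb : c * b = w * |b| := by
      rcases eq_or_ne b 0 with rfl | hb
      · simp
      · rw [hsign hb, mul_assoc, Real.sign_mul_self]
    calc w * |b| + c * t = c * (b + t) := by rw [← hcb]; ring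
      _ ≤ |c| * |b + t| := (le_abs_self _).trans (abs_mul c _).le
      _ ≤ w * |b + t| := mul_le_mul_of_nonneg_right hc (abs_nonneg _)

namespace EuclideanSpace

variable {ι : Type*} [Fintype ι]

theorem real_inner_eq_sum (x y : EuclideanSpace ℝ ι) : ⟪x, y⟫_ℝ = ∑ i, x i * y i := by
  simp [PiLp.inner_apply, mul_comm]

theorem sum_sq_sub_le_dist_sq (x y : EuclideanSpace ℝ ι) (S : Finset ι) :
    ∑ i ∈ S, (x i - y i) ^ 2 ≤ dist x y ^ 2 := by
  rw [dist_sq_eq]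
  simp only [Real.dist_eq, sq_abs]
  exact Finset.sum_le_sum_of_subset_of_nonneg (Finset.subset_univ S) fun i _ _ => sq_nonneg _

theorem dist_sq_eq_sum_of_eq_off {x y : EuclideanSpace ℝ ι} {S : Finset ι}
    (h : ∀ i ∉ S, x i = y i) : dist x y ^ 2 = ∑ i ∈ S, (x i - y i) ^ 2 := by
  rw [dist_sq_eq]
  simp only [Real.dist_eq, sq_abs]
  exact (Finset.sum_subset (Finset.subset_univ S) fun i _ hi => by simp [h i hi]).symm

end EuclideanSpace

section WeightedL1

variable {p : ℕ}

def weightedL1 (w : Fin p → ℝ) (x : E p) : ℝ := ∑ i, w i * |x i|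

def weightBox (w : Fin p → ℝ) : Set (E p) := {z | ∀ i, |z i| ≤ w i}

theorem weightedL1_single (w : Fin p → ℝ) (i : Fin p) (a : ℝ) :
    weightedL1 w (EuclideanSpace.single i a) = w i * |a| := by
  rw [weightedL1, Finset.sum_eq_single i (fun j _ hj => by simp [hj]) (by simp)]
  simp

theorem weightedL1_add_single (w : Fin p → ℝ) (β : E p) (i : Fin p) (t : ℝ) :
    weightedL1 w (β + EuclideanSpace.single i t) =
      weightedL1 w β - w i * |β i| + w i * |β i + t| := by
  have hoff : ∀ j ∈ Finset.univ.erase i,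
      w j * |(β + EuclideanSpace.single i t) j| = w j * |β j| := fun j hj => by
    simp [Finset.ne_of_mem_erase hj]
  rw [weightedL1, weightedL1, ← Finset.add_sum_erase _ _ (Finset.mem_univ i),
    ← Finset.add_sum_erase _ _ (Finset.mem_univ i), Finset.sum_congr rfl hoff]
  simp only [PiLp.add_apply, PiLp.single_apply, ite_true]
  ring

theorem inner_le_mul_weightedL1 {w : Fin p → ℝ} {z : E p} {c : ℝ} (h : ∀ i, |z i| ≤ c * w i)
    (b : E p) : ⟪z, b⟫_ℝ ≤ c * weightedL1 w b := by
  rw [EuclideanSpace.real_inner_eq_sum, weightedL1, Finset.mul_sum]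
  refine Finset.sum_le_sum fun i _ => ?_
  calc z i * b i ≤ |z i| * |b i| := (le_abs_self _).trans (abs_mul _ _).le
    _ ≤ c * w i * |b i| := mul_le_mul_of_nonneg_right (h i) (abs_nonneg _)
    _ = c * (w i * |b i|) := mul_assoc _ _ _

theorem dualBall_weightedL1 {w : Fin p → ℝ} (hw : ∀ i, 0 < w i) :
    dualBall (weightedL1 w) = weightBox w := by
  have hzero : (0 : E p) ∈ {b | weightedL1 w b ≤ 1} := by simp [weightedL1]
  ext z
  constructor
  · intro hz i
    set c := ∑ j, |z j| / w j
    have hc0 : 0 ≤ c := Finset.sum_nonneg fun j _ => div_nonneg (abs_nonneg _) (hw j).le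
    have hc : ∀ j, |z j| ≤ c * w j := fun j => by
      rw [← div_le_iff₀ (hw j)]
      exact Finset.single_le_sum (fun k _ => div_nonneg (abs_nonneg _) (hw k).le)
        (Finset.mem_univ j)
    have hbdd : BddAbove ((fun b => ⟪z, b⟫_ℝ) '' {b | weightedL1 w b ≤ 1}) := by
      refine ⟨c, ?_⟩
      rintro _ ⟨b, hb, rfl⟩
      exact (inner_le_mul_weightedL1 hc b).trans (mul_le_of_le_one_right hc0 hb)
    have htest : weightedL1 w (EuclideanSpace.single i (Real.sign (z i) / w i)) ≤ 1 := by
      rw [weightedL1_single, abs_div, abs_of_pos (hw i), mul_div_cancel₀ _ (hw i).ne']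
      exact Real.abs_sign_le_one _
    have hval : ⟪z, EuclideanSpace.single i (Real.sign (z i) / w i)⟫_ℝ = |z i| / w i := by
      rw [EuclideanSpace.inner_single_right, conj_trivial, div_mul_eq_mul_div,
        Real.sign_mul_self]
    have hle : |z i| / w i ≤ 1 := by
      rw [← hval]
      exact (le_csSup hbdd ⟨_, htest, rfl⟩).trans hz
    rwa [div_le_one (hw i)] at hle
  · intro hz
    show sSup ((fun b => ⟪z, b⟫_ℝ) '' {b | weightedL1 w b ≤ 1}) ≤ 1
    refine csSup_le ⟨_, Set.mem_image_of_mem _ hzero⟩ ?_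
    rintro _ ⟨b, hb, rfl⟩
    calc ⟪z, b⟫_ℝ ≤ 1 * weightedL1 w b :=
          inner_le_mul_weightedL1 (fun i => by simpa using hz i) b
      _ ≤ 1 := by rwa [one_mul]

theorem mem_subdiff_weightedL1_iff {w : Fin p → ℝ} {β g : E p} :
    g ∈ subdiff (weightedL1 w) β ↔ ∀ i t, w i * |β i| + g i * t ≤ w i * |β i + t| := by
  constructor
  · intro hg i t
    have h := hg (β + EuclideanSpace.single i t)
    rw [weightedL1_add_single, add_sub_cancel_left, EuclideanSpace.inner_single_right,
      conj_trivial] at h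
    linarith
  · intro h y
    show weightedL1 w β + ⟪g, y - β⟫_ℝ ≤ weightedL1 w y
    rw [EuclideanSpace.real_inner_eq_sum, weightedL1, weightedL1, ← Finset.sum_add_distrib]
    exact Finset.sum_le_sum fun i _ => by simpa using h i (y i - β i)

theorem subdiff_weightedL1 {w : Fin p → ℝ} (hw : ∀ i, 0 ≤ w i) (β : E p) :
    subdiff (weightedL1 w) β = weightBox w ∩
      {g | ∀ i ∈ Finset.univ.filter (fun i => β i ≠ 0), g i = w i * Real.sign (β i)} := by
  ext g
  simp only [mem_subdiff_weightedL1_iff, forall_mul_abs_le_mul_abs_add_iff, hw, forall_and,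
    weightBox, Set.mem_inter_iff, Set.mem_ofPred_eq, Finset.mem_filter, Finset.mem_univ, true_and]

theorem hausdorffDist_weightBox_face {w s : Fin p → ℝ} {S : Finset (Fin p)} (hw : ∀ i, 0 ≤ w i)
    (hs : ∀ i ∈ S, |s i| = w i) :
    hausdorffDist (weightBox w) (weightBox w ∩ {z | ∀ i ∈ S, z i = s i}) =
      √(4 * ∑ i ∈ S, w i ^ 2) := by
  refine hausdorffDist_eq_of_subset (Real.sqrt_nonneg _) Set.inter_subset_left ?_ ?_
  · intro z hz
    refine ⟨WithLp.toLp 2 fun i => if i ∈ S then s i else z i,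
      ⟨fun i => ?_, fun i hi => by simp [hi]⟩, ?_⟩
    · by_cases hi : i ∈ S <;> simp [hi, hs, hz i]
    refine Real.le_sqrt_of_sq_le ?_
    rw [EuclideanSpace.dist_sq_eq_sum_of_eq_off (S := S) fun i hi => by simp [hi], Finset.mul_sum]
    refine Finset.sum_le_sum fun i hi => ?_
    have hzi := abs_le.1 (hz i)
    have hsi := abs_le.1 (hs i hi).le
    simp only [if_pos hi]
    calc (z i - s i) ^ 2 ≤ (2 * w i) ^ 2 := sq_le_sq' (by linarith) (by linarith)
      _ = 4 * w i ^ 2 := by ring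
  · refine ⟨WithLp.toLp 2 fun i => if i ∈ S then -s i else 0, fun i => ?_, fun g hg => ?_⟩
    · by_cases hi : i ∈ S <;> simp [hi, hs, hw i]
    refine (Real.sqrt_le_sqrt ?_).trans_eq (Real.sqrt_sq dist_nonneg)
    refine le_of_eq_of_le ?_ (EuclideanSpace.sum_sq_sub_le_dist_sq _ g S)
    rw [Finset.mul_sum]
    refine Finset.sum_congr rfl fun i hi => ?_
    simp only [if_pos hi, hg.2 i hi]
    rw [← hs i hi, sq_abs]
    ring

end WeightedL1

theorem relDiam_weighted_l1_general (p : ℕ) (w : Fin p → ℝ) (hw : ∀ i, 0 < w i)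
    (β : E p) :
    relDiam (fun x : E p => ∑ i, w i * |x i|) β ^ 2 =
      4 * ∑ i ∈ Finset.univ.filter (fun i => β i ≠ 0), w i ^ 2 := by
  have hsign : ∀ i ∈ Finset.univ.filter (fun i => β i ≠ 0), |w i * Real.sign (β i)| = w i :=
    fun i hi => by
      rw [abs_mul, Real.abs_sign_of_ne_zero (Finset.mem_filter.1 hi).2, mul_one, abs_of_pos (hw i)]
  change hausdorffDist (dualBall (weightedL1 w)) (subdiff (weightedL1 w) β) ^ 2 = _
  rw [dualBall_weightedL1 hw, subdiff_weightedL1 (fun i => (hw i).le),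
    hausdorffDist_weightBox_face (fun i => (hw i).le) hsign, Real.sq_sqrt (by positivity)]

/-- for the weighted ℓ₁ norm `f(β) = Σᵢ wᵢ|βᵢ|` with positive weights,
the relative diameter of any `β ≠ 0` satisfies `φ(β;f)² = 4·Σ_{i : βᵢ ≠ 0} wᵢ²`. -/
theorem relDiam_weighted_l1 (p : ℕ) (w : Fin p → ℝ) (hw : ∀ i, 0 < w i)
    (β : E p) (hβ : β ≠ 0) :
    relDiam (fun x : E p => ∑ i, w i * |x i|) β ^ 2 =
      4 * ∑ i ∈ Finset.univ.filter (fun i => β i ≠ 0), w i ^ 2 :=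
  relDiam_weighted_l1_general p w hw β

end
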